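/- Fix real constants m₀ > 0, ω > 0, ħ > 0, a > -1, γ > 1/2 and set λ₀ = √(m₀ω/ħ). Define for x ≠ 0: (X̃f)(x) = √m₀·λ₀^a·|x|^a·x·f(x), (P̃f)(x) = -iħ·(λ₀^a√m₀)⁻¹·( |x|^{-a}·f'(x) - (a/2)·|x|^{-a-2}·x·f(x) - (γ-1/2)·|x|^{-a}·x⁻¹·f(-x) ), and the ladder operators (ã^±f)(x) = (1/√2)·(√(ω/ħ)·(X̃f)(x) ∓ (i/√(ħω))·(P̃f)(x)). Then for every f : ℝ → ℂ twice differentiable on ℝ \ {0} and every x ≠ 0: ã⁻(ã⁺f)(x) - ã⁺(ã⁻f)(x) = (1+a)·f(x) + (2γ-1)·f(-x). -/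

import Mathlib

/-- The deformed position operator `(X̃f)(x) = √m₀·λ₀^a·|x|^a·x·f(x)`. -/
noncomputable def Xop (m₀ lam a : ℝ) (f : ℝ → ℂ) (x : ℝ) : ℂ :=
  ((Real.sqrt m₀ * lam ^ a * |x| ^ a * x : ℝ) : ℂ) * f x

/-- The deformed parabose momentum operator
`(P̃f)(x) = -iħ·(λ₀^a√m₀)⁻¹·(|x|^(-a)·f'(x) - (a/2)·|x|^(-a-2)·x·f(x)
  - (γ-1/2)·|x|^(-a)·x⁻¹·f(-x))`. -/
noncomputable def Ppb (hbar m₀ lam a γ : ℝ) (f : ℝ → ℂ) (x : ℝ) : ℂ :=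
  (-Complex.I) * (hbar : ℂ) * (((lam ^ a * Real.sqrt m₀ : ℝ) : ℂ))⁻¹ *
    (((|x| ^ (-a) : ℝ) : ℂ) * deriv f x
      - ((a / 2 : ℝ) : ℂ) * ((|x| ^ (-a - 2) : ℝ) : ℂ) * (x : ℂ) * f x
      - ((γ - 1 / 2 : ℝ) : ℂ) * ((|x| ^ (-a) : ℝ) : ℂ) * (x : ℂ)⁻¹ * f (-x))

/-- The parabose creation operator `(ã⁺f)(x) = (1/√2)·(√(ω/ħ)·(X̃f)(x) - (i/√(ħω))·(P̃f)(x))`. -/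
noncomputable def aPlusPB (hbar m₀ ω lam a γ : ℝ) (f : ℝ → ℂ) (x : ℝ) : ℂ :=
  ((1 / Real.sqrt 2 : ℝ) : ℂ) *
    (((Real.sqrt (ω / hbar) : ℝ) : ℂ) * Xop m₀ lam a f x
      - Complex.I / ((Real.sqrt (hbar * ω) : ℝ) : ℂ) * Ppb hbar m₀ lam a γ f x)

/-- The parabose annihilation operator
`(ã⁻f)(x) = (1/√2)·(√(ω/ħ)·(X̃f)(x) + (i/√(ħω))·(P̃f)(x))`. -/
noncomputable def aMinusPB (hbar m₀ ω lam a γ : ℝ) (f : ℝ → ℂ) (x : ℝ) : ℂ :=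
  ((1 / Real.sqrt 2 : ℝ) : ℂ) *
    (((Real.sqrt (ω / hbar) : ℝ) : ℂ) * Xop m₀ lam a f x
      + Complex.I / ((Real.sqrt (hbar * ω) : ℝ) : ℂ) * Ppb hbar m₀ lam a γ f x)

/-!
Write `ã^± = p X̃ ∓ q P̃` with `p = √(ω/ħ)/√2` and `q = i/(√2 √(ħω))`. On functions differentiable
at `x` both operators act linearly at `x`, so the `X̃X̃` and `P̃P̃` terms cancel and
`[ã⁻, ã⁺] = -2pq [X̃, P̃]`; this is where twice differentiability is needed, since `ã^∓ f` itself
must be differentiable. The deformed canonical relation `[X̃, P̃] = iħ (1 + a + (2γ - 1) R̂)` is a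
direct computation from `(|x|^a x)' = (1 + a)|x|^a`: the weights `|x|^{±a}` cancel, and the
reflection term changes sign because `(X̃f)(-x) = -√m₀ λ₀^a |x|^a x f(-x)`. Finally `-2pq · iħ = 1`.
-/

open Complex

theorem hasDerivAt_abs_rpow_mul_self (r : ℝ) {x : ℝ} (hx : x ≠ 0) :
    HasDerivAt (fun y : ℝ => |y| ^ r * y) ((r + 1) * |x| ^ r) x := by
  refine (((hasDerivAt_abs hx).rpow_const (p := r) (Or.inl (abs_ne_zero.mpr hx))).fun_mul
    (hasDerivAt_id' x)).congr_deriv ?_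
  rw [Real.rpow_sub_one (abs_ne_zero.mpr hx)]
  field_simp
  linear_combination r * sign_mul_self x

theorem abs_rpow_neg_sub_two {x : ℝ} (hx : x ≠ 0) (a : ℝ) :
    |x| ^ (-a - 2) = (|x| ^ a)⁻¹ * (x ^ 2)⁻¹ := by
  have hpos : 0 < |x| := abs_pos.mpr hx
  rw [Real.rpow_sub hpos, Real.rpow_neg hpos.le, Real.rpow_two, sq_abs, div_eq_mul_inv]

section Operators

variable {hbar m₀ lam a γ : ℝ}

theorem Xop_linear_comb (c d : ℂ) (f g : ℝ → ℂ) (x : ℝ) :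
    Xop m₀ lam a (fun y => c * f y + d * g y) x = c * Xop m₀ lam a f x + d * Xop m₀ lam a g x := by
  simp only [Xop]
  ring

theorem Ppb_linear_comb {f g : ℝ → ℂ} {x : ℝ} (hf : DifferentiableAt ℝ f x)
    (hg : DifferentiableAt ℝ g x) (c d : ℂ) :
    Ppb hbar m₀ lam a γ (fun y => c * f y + d * g y) x
      = c * Ppb hbar m₀ lam a γ f x + d * Ppb hbar m₀ lam a γ g x := by
  simp only [Ppb]
  rw [deriv_fun_add (hf.const_mul c) (hg.const_mul d), deriv_const_mul c hf, deriv_const_mul d hg]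
  ring

theorem hasDerivAt_Xop {f : ℝ → ℂ} {f' : ℂ} {x : ℝ} (hx : x ≠ 0) (hf : HasDerivAt f f' x) :
    HasDerivAt (Xop m₀ lam a f)
      (((Real.sqrt m₀ * lam ^ a * ((a + 1) * |x| ^ a) : ℝ) : ℂ) * f x
        + ((Real.sqrt m₀ * lam ^ a * |x| ^ a * x : ℝ) : ℂ) * f') x := by
  have hmul : HasDerivAt (fun y : ℝ => Real.sqrt m₀ * lam ^ a * |y| ^ a * y)
      (Real.sqrt m₀ * lam ^ a * ((a + 1) * |x| ^ a)) x := by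
    simpa only [mul_assoc] using
      (hasDerivAt_abs_rpow_mul_self a hx).const_mul (Real.sqrt m₀ * lam ^ a)
  exact hmul.ofReal_comp.mul hf

theorem differentiableAt_Xop {f : ℝ → ℂ} {x : ℝ} (hx : x ≠ 0) (hf : DifferentiableAt ℝ f x) :
    DifferentiableAt ℝ (Xop m₀ lam a f) x :=
  (hasDerivAt_Xop hx hf.hasDerivAt).differentiableAt

theorem differentiableAt_Ppb {f : ℝ → ℂ} {x : ℝ} (hx : x ≠ 0) (hf : DifferentiableAt ℝ f x)
    (hf' : DifferentiableAt ℝ (deriv f) x) (hf_neg : DifferentiableAt ℝ f (-x)) :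
    DifferentiableAt ℝ (Ppb hbar m₀ lam a γ f) x := by
  have habs : DifferentiableAt ℝ (fun y : ℝ => |y|) x := differentiableAt_abs hx
  have habs_ne : |x| ≠ 0 := abs_ne_zero.mpr hx
  have hrefl : DifferentiableAt ℝ (fun y => f (-y)) x := by fun_prop
  unfold Ppb
  fun_prop (disch := simp [hx])

theorem Xop_Ppb_sub_Ppb_Xop (hc : lam ^ a * Real.sqrt m₀ ≠ 0) {f : ℝ → ℂ} {x : ℝ} (hx : x ≠ 0)
    (hf : DifferentiableAt ℝ f x) :
    Xop m₀ lam a (Ppb hbar m₀ lam a γ f) x - Ppb hbar m₀ lam a γ (Xop m₀ lam a f) x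
      = I * hbar * (((1 + a : ℝ) : ℂ) * f x + ((2 * γ - 1 : ℝ) : ℂ) * f (-x)) := by
  obtain ⟨hlam, hm⟩ := mul_ne_zero_iff.mp hc
  have hlamC : ((lam ^ a : ℝ) : ℂ) ≠ 0 := ofReal_ne_zero.mpr hlam
  have hmC : ((Real.sqrt m₀ : ℝ) : ℂ) ≠ 0 := ofReal_ne_zero.mpr hm
  have htC : ((|x| ^ a : ℝ) : ℂ) ≠ 0 :=
    ofReal_ne_zero.mpr (Real.rpow_pos_of_pos (abs_pos.mpr hx) a).ne'
  have hxC : (x : ℂ) ≠ 0 := ofReal_ne_zero.mpr hx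
  simp only [Ppb, (hasDerivAt_Xop hx hf.hasDerivAt).deriv, Xop, abs_neg,
    Real.rpow_neg (abs_nonneg x), abs_rpow_neg_sub_two hx]
  push_cast
  field_simp
  ring

end Operators

section Ladder

variable (hbar m₀ lam a γ : ℝ)

noncomputable def ladderOp (p q : ℂ) (f : ℝ → ℂ) : ℝ → ℂ :=
  fun y => p * Xop m₀ lam a f y + q * Ppb hbar m₀ lam a γ f y

variable {hbar m₀ lam a γ}

theorem ladderOp_comm (p q p' q' : ℂ) {f : ℝ → ℂ} {x : ℝ}
    (hX : DifferentiableAt ℝ (Xop m₀ lam a f) x)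
    (hP : DifferentiableAt ℝ (Ppb hbar m₀ lam a γ f) x) :
    ladderOp hbar m₀ lam a γ p q (ladderOp hbar m₀ lam a γ p' q' f) x
      - ladderOp hbar m₀ lam a γ p' q' (ladderOp hbar m₀ lam a γ p q f) x
      = (p * q' - p' * q)
        * (Xop m₀ lam a (Ppb hbar m₀ lam a γ f) x - Ppb hbar m₀ lam a γ (Xop m₀ lam a f) x) := by
  unfold ladderOp
  rw [Xop_linear_comb, Xop_linear_comb, Ppb_linear_comb hX hP, Ppb_linear_comb hX hP]
  ring

theorem aPlusPB_eq_ladderOp (ω : ℝ) :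
    aPlusPB hbar m₀ ω lam a γ = ladderOp hbar m₀ lam a γ
      ((1 / Real.sqrt 2 : ℝ) * (Real.sqrt (ω / hbar) : ℝ))
      (-((1 / Real.sqrt 2 : ℝ) * (I / (Real.sqrt (hbar * ω) : ℝ)))) := by
  funext f y
  simp only [aPlusPB, ladderOp]
  ring

theorem aMinusPB_eq_ladderOp (ω : ℝ) :
    aMinusPB hbar m₀ ω lam a γ = ladderOp hbar m₀ lam a γ
      ((1 / Real.sqrt 2 : ℝ) * (Real.sqrt (ω / hbar) : ℝ))
      ((1 / Real.sqrt 2 : ℝ) * (I / (Real.sqrt (hbar * ω) : ℝ))) := by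
  funext f y
  simp only [aMinusPB, ladderOp]
  ring

end Ladder

theorem sqrt_div_mul_self {ω hbar : ℝ} (hhb : 0 < hbar) :
    Real.sqrt (ω / hbar) * hbar = Real.sqrt (hbar * ω) :=
  calc Real.sqrt (ω / hbar) * hbar = Real.sqrt (ω / hbar) * Real.sqrt (hbar ^ 2) := by
        rw [Real.sqrt_sq hhb.le]
    _ = Real.sqrt (hbar * ω) := by
        rw [← Real.sqrt_mul' _ (sq_nonneg _)]; congr 1; field_simp

theorem ladder_coeff_mul_I_mul_hbar {ω hbar : ℝ} (hω : 0 < ω) (hhb : 0 < hbar) :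
    (((1 / Real.sqrt 2 : ℝ) * (Real.sqrt (ω / hbar) : ℝ))
        * (-((1 / Real.sqrt 2 : ℝ) * (I / (Real.sqrt (hbar * ω) : ℝ))))
      - ((1 / Real.sqrt 2 : ℝ) * (Real.sqrt (ω / hbar) : ℝ))
        * ((1 / Real.sqrt 2 : ℝ) * (I / (Real.sqrt (hbar * ω) : ℝ)))) * (I * hbar) = 1 := by
  have hs : ((Real.sqrt (hbar * ω) : ℝ) : ℂ) ≠ 0 := ofReal_ne_zero.mpr (by positivity)
  have h2 : ((Real.sqrt 2 : ℝ) : ℂ) ^ 2 = 2 := by norm_cast; simp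
  calc _ = -I ^ 2 * ((Real.sqrt 2 : ℝ) : ℂ)⁻¹ ^ 2 * 2
        * (((Real.sqrt (ω / hbar) * hbar : ℝ) : ℂ) / (Real.sqrt (hbar * ω) : ℝ)) := by
        push_cast; ring
    _ = 1 := by
      rw [sqrt_div_mul_self hhb, div_self hs, I_sq, inv_pow, h2]; norm_num

theorem stmt12_general (m₀ ω hbar a γ : ℝ) (hm₀ : 0 < m₀) (hω : 0 < ω) (hhb : 0 < hbar)
    (lam : ℝ) (hlam : lam = Real.sqrt (m₀ * ω / hbar))
    (f : ℝ → ℂ)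
    (hf : ∀ y : ℝ, y ≠ 0 → DifferentiableAt ℝ f y)
    (hf' : ∀ y : ℝ, y ≠ 0 → DifferentiableAt ℝ (deriv f) y)
    (x : ℝ) (hx : x ≠ 0) :
    aMinusPB hbar m₀ ω lam a γ (aPlusPB hbar m₀ ω lam a γ f) x
      - aPlusPB hbar m₀ ω lam a γ (aMinusPB hbar m₀ ω lam a γ f) x
      = ((1 + a : ℝ) : ℂ) * f x + ((2 * γ - 1 : ℝ) : ℂ) * f (-x) := by
  have hc : lam ^ a * Real.sqrt m₀ ≠ 0 := by
    subst hlam; positivity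
  have hfx := hf x hx
  rw [aPlusPB_eq_ladderOp, aMinusPB_eq_ladderOp,
    ladderOp_comm _ _ _ _ (differentiableAt_Xop hx hfx)
      (differentiableAt_Ppb hx hfx (hf' x hx) (hf (-x) (neg_ne_zero.mpr hx))),
    Xop_Ppb_sub_Ppb_Xop hc hx hfx, ← mul_assoc, ladder_coeff_mul_I_mul_hbar hω hhb, one_mul]

/-- the deformed osp(1|2) relation
`ã⁻(ã⁺f)(x) - ã⁺(ã⁻f)(x) = (1+a)·f(x) + (2γ-1)·f(-x)` for every `f` twice differentiable on
`ℝ \ {0}` and every `x ≠ 0`. -/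
theorem stmt12 (m₀ ω hbar a γ : ℝ) (hm₀ : 0 < m₀) (hω : 0 < ω) (hhb : 0 < hbar)
    (ha : -1 < a) (hγ : 1 / 2 < γ)
    (lam : ℝ) (hlam : lam = Real.sqrt (m₀ * ω / hbar))
    (f : ℝ → ℂ)
    (hf : ∀ y : ℝ, y ≠ 0 → DifferentiableAt ℝ f y)
    (hf' : ∀ y : ℝ, y ≠ 0 → DifferentiableAt ℝ (deriv f) y)
    (x : ℝ) (hx : x ≠ 0) :
    aMinusPB hbar m₀ ω lam a γ (aPlusPB hbar m₀ ω lam a γ f) x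
      - aPlusPB hbar m₀ ω lam a γ (aMinusPB hbar m₀ ω lam a γ f) x
      = ((1 + a : ℝ) : ℂ) * f x + ((2 * γ - 1 : ℝ) : ℂ) * f (-x) :=
  stmt12_general m₀ ω hbar a γ hm₀ hω hhb lam hlam f hf hf' x hx
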